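/- arXiv:2311.17623 — 4 statements merged into one kernel-verified Lean document; each statement's English description precedes it below -/
import Mathlib

section
/- Let (ξᵢ) be i.i.d. real random variables with |ξᵢ| ≤ C almost surely and E[ξᵢ] = 0, and set Tₖ = (1/k)∑_{i=1}^k ξᵢ. Then for every η > 0 and every n ∈ ℕ, P(sup_{k ≥ n} Tₖ > η) ≤ exp(-n η² / (2 C²)). -/
/-!
Instead of the reverse martingale `(T k)`, use the forward process
`Z k = exp (t S_k - k t² C² / 2)` with `S_k = ξ 0 + ⋯ + ξ (k - 1)` and `t = η / C²`.
By Hoeffding's lemma and independence it is a nonnegative supermartingale with `E[Z 0] ≤ 1`.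
On the event `S_k > k η` with `k ≥ n` it exceeds `exp (k η² / (2 C²)) ≥ exp (n η² / (2 C²))`,
so Ville's maximal inequality for nonnegative supermartingales gives the bound.
-/

open MeasureTheory ProbabilityTheory Filter Topology Real Finset
open scoped NNReal

namespace MeasureTheory

variable {Ω : Type*} {m0 : MeasurableSpace Ω} {μ : Measure Ω} [IsFiniteMeasure μ]
  {𝒢 : Filtration ℕ m0} {f : ℕ → Ω → ℝ}

theorem Supermartingale.integral_stoppedValue_le (hf : Supermartingale f 𝒢 μ) {τ : Ω → ℕ∞}
    (hτ : IsStoppingTime 𝒢 τ) {N : ℕ} (hbdd : ∀ ω, τ ω ≤ N) :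
    μ[stoppedValue f τ] ≤ μ[f 0] := by
  have h := hf.neg.expected_stoppedValue_mono (isStoppingTime_const 𝒢 0) hτ
    (fun _ => zero_le) hbdd
  simpa [stoppedValue_const, stoppedValue, integral_neg] using h

theorem Supermartingale.mul_measureReal_exists_le_ge_le (hf : Supermartingale f 𝒢 μ)
    (hnonneg : 0 ≤ f) (ε : ℝ) (N : ℕ) :
    ε * μ.real {ω | ∃ k ≤ N, ε ≤ f k ω} ≤ μ[f 0] := by
  set A := {ω | ∃ k ≤ N, ε ≤ f k ω}
  set τ : Ω → ℕ∞ := fun ω => (hittingBtwn f (Set.Ici ε) 0 N ω : ℕ)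
  have hτ : IsStoppingTime 𝒢 τ :=
    hf.stronglyAdapted.adapted.isStoppingTime_hittingBtwn measurableSet_Ici
  have hτ_le (ω : Ω) : τ ω ≤ N := by
    simpa [τ] using hittingBtwn_le (u := f) (s := Set.Ici ε) (n := 0) (m := N) ω
  have hA : MeasurableSet A := by
    have hfk (k : ℕ) : Measurable (f k) := (hf.stronglyMeasurable k).measurable.mono (𝒢.le k) le_rfl
    measurability
  have hstop (ω : Ω) : A.indicator (fun _ => ε) ω ≤ stoppedValue f τ ω := by
    by_cases hω : ω ∈ A
    · obtain ⟨k, hkN, hk⟩ := hω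
      rw [Set.indicator_of_mem (show ω ∈ A from ⟨k, hkN, hk⟩)]
      exact stoppedValue_hittingBtwn_mem ⟨k, ⟨zero_le, hkN⟩, hk⟩
    · rw [Set.indicator_of_notMem hω]
      exact hnonneg _ _
  calc ε * μ.real A = ∫ ω, A.indicator (fun _ => ε) ω ∂μ := by
        rw [integral_indicator_const _ hA, smul_eq_mul, mul_comm]
    _ ≤ μ[stoppedValue f τ] :=
        integral_mono ((integrable_const ε).indicator hA)
          (integrable_stoppedValue ℕ hτ hf.integrable hτ_le) hstop
    _ ≤ μ[f 0] := hf.integral_stoppedValue_le hτ hτ_le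

/-- **Ville's inequality**. -/
theorem Supermartingale.mul_measureReal_exists_ge_le (hf : Supermartingale f 𝒢 μ)
    (hnonneg : 0 ≤ f) (ε : ℝ) :
    ε * μ.real {ω | ∃ k, ε ≤ f k ω} ≤ μ[f 0] := by
  have hmono : Monotone fun N => {ω | ∃ k ≤ N, ε ≤ f k ω} := fun N M hNM ω hω => by
    obtain ⟨k, hk, hkε⟩ := hω
    exact ⟨k, hk.trans hNM, hkε⟩
  have hunion : {ω | ∃ k, ε ≤ f k ω} = ⋃ N, {ω | ∃ k ≤ N, ε ≤ f k ω} := by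
    ext ω
    simp only [Set.mem_ofPred_eq, Set.mem_iUnion]
    exact ⟨fun ⟨k, hk⟩ => ⟨k, k, le_rfl, hk⟩, fun ⟨_, k, _, hk⟩ => ⟨k, hk⟩⟩
  have hlim : Tendsto (fun N => ε * μ.real {ω | ∃ k ≤ N, ε ≤ f k ω}) atTop
      (𝓝 (ε * μ.real {ω | ∃ k, ε ≤ f k ω})) := by
    rw [hunion]
    exact ((ENNReal.tendsto_toReal (measure_ne_top μ _)).comp
      (tendsto_measure_iUnion_atTop hmono)).const_mul ε
  exact le_of_tendsto' hlim fun N => hf.mul_measureReal_exists_le_ge_le hnonneg ε N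

end MeasureTheory

namespace ProbabilityTheory

variable {Ω : Type*} {m0 : MeasurableSpace Ω} {μ : Measure Ω}

theorem HasSubgaussianMGF.integral_exp_mul_sub_le_one {X : Ω → ℝ} {c : ℝ≥0}
    (hX : HasSubgaussianMGF X c μ) (t : ℝ) :
    μ[fun ω => exp (t * X ω - c * t ^ 2 / 2)] ≤ 1 := by
  simp only [exp_sub, integral_div]
  exact (div_le_one (exp_pos _)).2 (hX.mgf_le t)

variable [IsProbabilityMeasure μ] {ξ : ℕ → Ω → ℝ}

/-- The sum of `k + 1` terms sits at time `k`, so that the process is adapted to the natural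
filtration of `ξ`. -/
theorem iIndepFun.supermartingale_exp_sum (hξ : ∀ i, StronglyMeasurable (ξ i))
    (hindep : iIndepFun ξ μ) {c : ℝ≥0} (hsub : ∀ i, HasSubgaussianMGF (ξ i) c μ) (t : ℝ) :
    Supermartingale (fun k ω => exp (t * ∑ i ∈ range (k + 1), ξ i ω - (k + 1) * (c * t ^ 2 / 2)))
      (Filtration.natural ξ hξ) μ := by
  set a : ℝ := c * t ^ 2 / 2
  set ℱ := Filtration.natural ξ hξ
  set Z : ℕ → Ω → ℝ := fun k ω => exp (t * ∑ i ∈ range (k + 1), ξ i ω - (k + 1) * a)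
  have hadapted : StronglyAdapted ℱ Z := by
    intro k
    have hξk (i : ℕ) (hi : i ∈ range (k + 1)) : Measurable[ℱ k] (ξ i) :=
      ((Filtration.stronglyAdapted_natural hξ i).mono
        (ℱ.mono (Nat.lt_succ_iff.1 (mem_range.1 hi)))).measurable
    exact ((((Finset.measurable_sum _ hξk).const_mul t).sub_const _).exp).stronglyMeasurable
  have hint (k : ℕ) : Integrable (Z k) μ := by
    have h := ((HasSubgaussianMGF.sum_of_iIndepFun hindep (s := range (k + 1))
      fun i _ => hsub i).integrable_exp_mul t).div_const (exp ((k + 1) * a))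
    simpa only [Z, exp_sub] using h
  refine supermartingale_nat hadapted hint fun k => ?_
  set Y : Ω → ℝ := fun ω => exp (t * ξ (k + 1) ω - a)
  have hZY : Z (k + 1) = Z k * Y := by
    funext ω
    simp only [Z, Y, Pi.mul_apply, ← exp_add, sum_range_succ]
    push_cast
    ring_nf
  have hY_int : Integrable Y μ := by
    simpa only [Y, exp_sub] using ((hsub (k + 1)).integrable_exp_mul t).div_const (exp a)
  have hY_mean : μ[Y] ≤ 1 := (hsub (k + 1)).integral_exp_mul_sub_le_one t
  have hY_cond : μ[Y | ℱ k] =ᵐ[μ] fun _ => μ[Y] := by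
    refine condExp_indep_eq (hξ (k + 1)).measurable.comap_le (ℱ.le k) ?_
      (hindep.indep_comap_natural_of_lt hξ (Nat.lt_succ_self k))
    exact (((comap_measurable (ξ (k + 1))).const_mul t).sub_const a).exp.stronglyMeasurable
  filter_upwards [condExp_mul_of_stronglyMeasurable_left (hadapted k) (hZY ▸ hint (k + 1)) hY_int,
    hY_cond] with ω hpull hconst
  rw [hZY, hpull, Pi.mul_apply, hconst]
  exact mul_le_of_le_one_right (exp_pos _).le hY_mean

theorem iIndepFun.measureReal_exists_le_mul_lt_sum_le (hξ : ∀ i, StronglyMeasurable (ξ i))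
    (hindep : iIndepFun ξ μ) {c : ℝ≥0} (hc : 0 < c) (hsub : ∀ i, HasSubgaussianMGF (ξ i) c μ)
    {η : ℝ} (hη : 0 < η) (n : ℕ) :
    μ.real {ω | ∃ k, n ≤ k ∧ k * η < ∑ i ∈ range k, ξ i ω} ≤ exp (-n * η ^ 2 / (2 * c)) := by
  set t : ℝ := η / c
  set a : ℝ := c * t ^ 2 / 2
  have ht : 0 < t := div_pos hη hc
  have hta : t * η = 2 * a := by simp only [t, a]; field_simp
  have hZ := hindep.supermartingale_exp_sum hξ hsub t
  set Z : ℕ → Ω → ℝ := fun k ω => exp (t * ∑ i ∈ range (k + 1), ξ i ω - (k + 1) * a)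
  have hZ0 : μ[Z 0] ≤ 1 := by
    simpa [Z] using (hsub 0).integral_exp_mul_sub_le_one t
  have hcross : {ω | ∃ k, n ≤ k ∧ k * η < ∑ i ∈ range k, ξ i ω} ⊆
      {ω | ∃ k, exp (n * a) ≤ Z k ω} := by
    rintro ω ⟨k, hnk, hk⟩
    obtain ⟨j, rfl⟩ : ∃ j, k = j + 1 :=
      Nat.exists_eq_add_one.2 (Nat.pos_of_ne_zero (by rintro rfl; simp at hk))
    refine ⟨j, exp_le_exp.2 ?_⟩
    have ha : 0 ≤ a := by positivity
    have hnj : (n : ℝ) ≤ j + 1 := by exact_mod_cast hnk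
    push_cast at hk
    nlinarith [mul_lt_mul_of_pos_left hk ht]
  have hville := hZ.mul_measureReal_exists_ge_le (fun k ω => (exp_pos _).le) (exp (n * a))
  calc μ.real {ω | ∃ k, n ≤ k ∧ k * η < ∑ i ∈ range k, ξ i ω}
      ≤ μ.real {ω | ∃ k, exp (n * a) ≤ Z k ω} := measureReal_mono hcross
    _ ≤ exp (-(n * a)) := by
        rw [exp_neg, inv_eq_one_div, le_div_iff₀' (exp_pos _)]
        exact hville.trans hZ0
    _ = exp (-n * η ^ 2 / (2 * c)) := by
        simp only [a, t]; field_simp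

end ProbabilityTheory

theorem stmt_5_general {Ω : Type*} [MeasurableSpace Ω] (P : Measure Ω) [IsProbabilityMeasure P]
    (ξ : ℕ → Ω → ℝ) (hmeas : ∀ i, Measurable (ξ i))
    (hindep : iIndepFun ξ P)
    (C : ℝ) (hC : 0 < C) (hbdd : ∀ i, ∀ᵐ ω ∂P, |ξ i ω| ≤ C)
    (hcent : ∀ i, ∫ ω, ξ i ω ∂P = 0)
    (T : ℕ → Ω → ℝ) (hT : ∀ k ω, T k ω = (1 / (k : ℝ)) * ∑ i ∈ Finset.range k, ξ i ω)
    (η : ℝ) (hη : 0 < η) (n : ℕ) :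
    (P {ω | ∃ k, n ≤ k ∧ η < T k ω}).toReal ≤
      Real.exp (-(n : ℝ) * η ^ 2 / (2 * C ^ 2)) := by
  set c : ℝ≥0 := (‖C - -C‖₊ / 2) ^ 2
  have hc : (c : ℝ) = C ^ 2 := by
    simp only [c, NNReal.coe_pow, NNReal.coe_div, coe_nnnorm, norm_eq_abs, div_pow, sq_abs]
    norm_num
    ring
  have hsub (i : ℕ) : HasSubgaussianMGF (ξ i) c P :=
    hasSubgaussianMGF_of_mem_Icc_of_integral_eq_zero (hmeas i).aemeasurable
      ((hbdd i).mono fun ω hω => abs_le.1 hω) (hcent i)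
  have hevent : {ω | ∃ k, n ≤ k ∧ η < T k ω} =
      {ω | ∃ k, n ≤ k ∧ k * η < ∑ i ∈ range k, ξ i ω} := by
    ext ω
    refine exists_congr fun k => and_congr_right fun _ => ?_
    rw [hT]
    rcases Nat.eq_zero_or_pos k with rfl | hk
    · simp [hη.not_gt]
    · rw [one_div, lt_inv_mul_iff₀ (by exact_mod_cast hk)]
  rw [← measureReal_def, hevent, ← hc]
  exact hindep.measureReal_exists_le_mul_lt_sum_le (fun i => (hmeas i).stronglyMeasurable)
    (by rw [← NNReal.coe_pos, hc]; positivity) hsub hη n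

/-- Supremal Hoeffding-type bound for sample means of i.i.d. bounded centered variables:
`P(sup_{k ≥ n} T_k > η) ≤ exp(-n η² / (2C²))`. -/
theorem stmt_5 {Ω : Type*} [MeasurableSpace Ω] (P : Measure Ω) [IsProbabilityMeasure P]
    (ξ : ℕ → Ω → ℝ) (hmeas : ∀ i, Measurable (ξ i))
    (hindep : iIndepFun ξ P)
    (hident : ∀ i, Measure.map (ξ i) P = Measure.map (ξ 0) P)
    (C : ℝ) (hC : 0 < C) (hbdd : ∀ i, ∀ᵐ ω ∂P, |ξ i ω| ≤ C)
    (hcent : ∀ i, ∫ ω, ξ i ω ∂P = 0)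
    (T : ℕ → Ω → ℝ) (hT : ∀ k ω, T k ω = (1 / (k : ℝ)) * ∑ i ∈ Finset.range k, ξ i ω)
    (η : ℝ) (hη : 0 < η) (n : ℕ) (hn : 1 ≤ n) :
    (P {ω | ∃ k, n ≤ k ∧ η < T k ω}).toReal ≤
      Real.exp (-(n : ℝ) * η ^ 2 / (2 * C ^ 2)) :=
  stmt_5_general P ξ hmeas hindep C hC hbdd hcent T hT η hη n
end

section
/- Let X₁, X₂, … be i.i.d. with distribution function F, let α ∈ (0,1), suppose the α-quantile q_α = F⁻¹(α) is the unique α-quantile, and let Fₖ⁻¹(α) denote the empirical sample α-quantile based on X₁,…,X_k. Then for every n ∈ ℕ and every x > 0, P(sup_{k ≥ n} |Fₖ⁻¹(α) - q_α| > x) ≤ 2 exp(-2 n d(x)²), where d(x) = min{F(q_α + x) - α, α - F(q_α - x)}. -/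
/-!
For a Borel set `s` put `Yᵢ = 1{Xᵢ ∈ s} - P(X₀ ∈ s)`. These are independent, centred and take
values in an interval of length one, so by Hoeffding's lemma they are sub-Gaussian with variance
proxy `1/4`. Dividing `exp (t Yᵢ)` by its mean gives independent mean-one factors whose partial
products form a nonnegative martingale; Doob's maximal inequality for it (Ville's inequality)
bounds the probability that `∑_{i<k} Yᵢ ≥ k δ` for some `k ≥ n` by `exp (-2 n δ²)`
(take `t = 4 δ`).

If the `k`-th empirical quantile exceeds `q + x`, fewer than `α k` of the first `k` samples are
`≤ q + x`, so the number of samples in `s = (q + x, ∞)` exceeds its mean `k (1 - F (q + x))` by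
more than `k d`; if it is below `q - x`, at least `α k` samples lie in `s = (-∞, q - x]`, at least
`k d` above the mean `k F (q - x)`. A union bound over the two sides gives the factor `2`.
-/

open MeasureTheory ProbabilityTheory Finset Real
open scoped ENNReal NNReal

section

variable {Ω : Type*} {m0 : MeasurableSpace Ω} {P : Measure Ω}

/-- The product of the first `k` factors is a martingale for the filtration generated by
`G 0, …, G (k - 1)`; shifting the index by one makes it one for `Filtration.natural G`. -/
lemma martingale_prod_range_succ [IsProbabilityMeasure P] {G : ℕ → Ω → ℝ}
    (hindep : iIndepFun G P) (hsm : ∀ i, StronglyMeasurable (G i))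
    (hint : ∀ i, Integrable (G i) P) (hmean : ∀ i, P[G i] = 1) :
    Martingale (fun k => ∏ i ∈ range (k + 1), G i) (Filtration.natural G hsm) P := by
  have hprod_int : ∀ k, Integrable (∏ i ∈ range k, G i) P := by
    intro k
    induction k with
    | zero => exact integrable_const (1 : ℝ)
    | succ k ih =>
      rw [prod_range_succ]
      exact (hindep.indepFun_prod_range_succ (fun i => (hsm i).measurable) k).integrable_mul
        ih (hint k)
  have hadapted : StronglyAdapted (Filtration.natural G hsm)
      (fun k => ∏ i ∈ range (k + 1), G i) := fun k =>
    Finset.stronglyMeasurable_prod _ fun i hi =>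
      (Filtration.stronglyAdapted_natural hsm i).mono
        (Filtration.mono _ (Nat.lt_succ_iff.mp (mem_range.mp hi)))
  refine martingale_nat hadapted (fun k => hprod_int _) fun k => ?_
  have hpull := condExp_mul_of_stronglyMeasurable_left (hadapted k)
    (by rw [← prod_range_succ]; exact hprod_int (k + 2)) (hint (k + 1))
  have hindep_cond := hindep.condExp_natural_ae_eq_of_lt hsm (Nat.lt_succ_self k)
  rw [prod_range_succ _ (k + 1)]
  filter_upwards [hpull, hindep_cond] with ω h1 h2
  rw [h1, Pi.mul_apply, h2, hmean, mul_one]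

lemma Martingale.measureReal_exists_ge_le [IsFiniteMeasure P] {𝒢 : Filtration ℕ m0}
    {f : ℕ → Ω → ℝ} (hf : Martingale f 𝒢 P) (hnonneg : 0 ≤ f) {ε : ℝ} (hε : 0 < ε) :
    P.real {ω | ∃ k, ε ≤ f k ω} ≤ P[f 0] / ε := by
  lift ε to ℝ≥0 using hε.le
  have hfin : ∀ N, (ε : ℝ≥0∞) * P {ω | ∃ k ≤ N, (ε : ℝ) ≤ f k ω} ≤ ENNReal.ofReal P[f 0] := by
    intro N
    calc (ε : ℝ≥0∞) * P {ω | ∃ k ≤ N, (ε : ℝ) ≤ f k ω}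
        = ε * P {ω | (ε : ℝ) ≤ (range (N + 1)).sup' nonempty_range_add_one fun k => f k ω} := by
          congr 2
          ext ω
          simp [Finset.le_sup'_iff]
      _ ≤ ENNReal.ofReal (∫ ω in {ω | (ε : ℝ) ≤
            (range (N + 1)).sup' nonempty_range_add_one fun k => f k ω}, f N ω ∂P) :=
          maximal_ineq hf.submartingale hnonneg N
      _ ≤ ENNReal.ofReal P[f N] :=
          ENNReal.ofReal_le_ofReal (setIntegral_le_integral (hf.integrable N)
            (Filter.Eventually.of_forall (hnonneg N)))
      _ = ENNReal.ofReal P[f 0] := by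
          rw [← setIntegral_univ, ← hf.setIntegral_eq (Nat.zero_le N) MeasurableSet.univ,
            setIntegral_univ]
  have hunion : {ω | ∃ k, (ε : ℝ) ≤ f k ω} = ⋃ N, {ω | ∃ k ≤ N, (ε : ℝ) ≤ f k ω} := by
    ext ω
    simp only [Set.mem_ofPred_eq, Set.mem_iUnion]
    exact ⟨fun ⟨k, hk⟩ => ⟨k, k, le_rfl, hk⟩, fun ⟨_, k, _, hk⟩ => ⟨k, hk⟩⟩
  have hmono : Monotone fun N => {ω | ∃ k ≤ N, (ε : ℝ) ≤ f k ω} :=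
    fun N N' hN ω ⟨k, hk, hfk⟩ => ⟨k, hk.trans hN, hfk⟩
  have hbound : (ε : ℝ≥0∞) * P {ω | ∃ k, (ε : ℝ) ≤ f k ω} ≤ ENNReal.ofReal P[f 0] := by
    rw [hunion, hmono.measure_iUnion, ENNReal.mul_iSup]
    exact iSup_le hfin
  have hf0 : 0 ≤ P[f 0] := integral_nonneg (hnonneg 0)
  rw [le_div_iff₀ hε, mul_comm]
  simpa [measureReal_def, ENNReal.toReal_mul, ENNReal.toReal_ofReal hf0] using
    ENNReal.toReal_mono ENNReal.ofReal_ne_top hbound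

lemma measureReal_exists_sum_range_ge_le [IsProbabilityMeasure P] {Y : ℕ → Ω → ℝ} {c : ℝ≥0}
    (hmeas : ∀ i, Measurable (Y i)) (hindep : iIndepFun Y P)
    (hY : ∀ i, HasSubgaussianMGF (Y i) c P) (hc : 0 < c) {δ : ℝ} (hδ : 0 ≤ δ) (n : ℕ) :
    P.real {ω | ∃ k, n ≤ k ∧ k * δ ≤ ∑ i ∈ range k, Y i ω} ≤
      exp (-(n * δ ^ 2 / (2 * c))) := by
  rcases Nat.eq_zero_or_pos n with rfl | hn
  · simp
  -- `t = δ / c` maximises `t k δ - k c t² / 2`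
  set t : ℝ := δ / c
  set G : ℕ → Ω → ℝ := fun i ω => exp (t * Y i ω - cgf (Y i) P t)
  have hGmeas : ∀ i, Measurable (G i) := fun i => by fun_prop
  have hGindep : iIndepFun G P :=
    hindep.comp (fun i y => exp (t * y - cgf (Y i) P t)) fun i => by fun_prop
  have hGeq : ∀ i, G i = fun ω => exp (t * Y i ω) * exp (-cgf (Y i) P t) := fun i => by
    ext ω
    rw [← exp_add, ← sub_eq_add_neg]
  have hGint : ∀ i, Integrable (G i) P := fun i => by
    rw [hGeq]
    exact ((hY i).integrable_exp_mul t).mul_const _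
  have hGmean : ∀ i, P[G i] = 1 := fun i => by
    rw [hGeq, integral_mul_const, ← mgf, ← exp_cgf ((hY i).integrable_exp_mul t), ← exp_add,
      add_neg_cancel, exp_zero]
  have hM := martingale_prod_range_succ hGindep (fun i => (hGmeas i).stronglyMeasurable) hGint
    hGmean
  have hsubset : {ω | ∃ k, n ≤ k ∧ k * δ ≤ ∑ i ∈ range k, Y i ω} ⊆
      {ω | ∃ k, exp (n * δ ^ 2 / (2 * c)) ≤ (∏ i ∈ range (k + 1), G i) ω} := by
    rintro ω ⟨k, hk, hsum⟩
    refine ⟨k - 1, ?_⟩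
    rw [Nat.sub_add_cancel (hn.trans_le hk), prod_apply, ← exp_sum, exp_le_exp, sum_sub_distrib,
      ← mul_sum]
    have hcgf : ∑ i ∈ range k, cgf (Y i) P t ≤ k * (c * t ^ 2 / 2) := by
      calc ∑ i ∈ range k, cgf (Y i) P t ≤ ∑ i ∈ range k, c * t ^ 2 / 2 :=
            sum_le_sum fun i _ => (hY i).cgf_le t
        _ = k * (c * t ^ 2 / 2) := by simp
    have hnk : (n : ℝ) ≤ k := by exact_mod_cast hk
    have hc' : (0 : ℝ) < c := hc
    have ht : t * (k * δ) - k * (c * t ^ 2 / 2) = k * δ ^ 2 / (2 * c) := by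
      simp only [t]
      field_simp
      ring
    calc n * δ ^ 2 / (2 * c) ≤ k * δ ^ 2 / (2 * c) := by gcongr
      _ = t * (k * δ) - k * (c * t ^ 2 / 2) := ht.symm
      _ ≤ t * ∑ i ∈ range k, Y i ω - ∑ i ∈ range k, cgf (Y i) P t := by
        gcongr
  calc P.real {ω | ∃ k, n ≤ k ∧ k * δ ≤ ∑ i ∈ range k, Y i ω}
      ≤ P.real {ω | ∃ k, exp (n * δ ^ 2 / (2 * c)) ≤ (∏ i ∈ range (k + 1), G i) ω} :=
        measureReal_mono hsubset
    _ ≤ P[∏ i ∈ range (0 + 1), G i] / exp (n * δ ^ 2 / (2 * c)) :=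
        Martingale.measureReal_exists_ge_le hM
          (fun k ω => by
            simpa only [Pi.zero_apply, prod_apply] using prod_nonneg fun i _ => (exp_pos _).le)
          (exp_pos _)
    _ = exp (-(n * δ ^ 2 / (2 * c))) := by
        rw [zero_add, prod_range_one, hGmean, exp_neg, one_div]

lemma hasSubgaussianMGF_indicator_comp_sub [IsProbabilityMeasure P] {Z : Ω → ℝ}
    (hZ : Measurable Z) {s : Set ℝ} (hs : MeasurableSet s) :
    HasSubgaussianMGF (fun ω => s.indicator 1 (Z ω) - P.real (Z ⁻¹' s)) 4⁻¹ P := by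
  have h := hasSubgaussianMGF_of_mem_Icc (μ := P) (X := fun ω => s.indicator 1 (Z ω)) (a := 0)
    (b := 1) ((measurable_one.indicator hs).comp hZ).aemeasurable
    (Filter.Eventually.of_forall fun ω => ⟨Set.indicator_nonneg (fun _ _ => zero_le_one) _,
      Set.indicator_le_self' (fun _ _ => zero_le_one) _⟩)
  have hmean : P[fun ω => s.indicator 1 (Z ω)] = P.real (Z ⁻¹' s) := by
    rw [← integral_indicator_one (hZ hs)]
    rfl
  rw [hmean] at h
  convert h using 1
  ext
  norm_num

lemma measureReal_exists_sum_indicator_sub_ge_le [IsProbabilityMeasure P] {X : ℕ → Ω → ℝ}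
    (hmeas : ∀ i, Measurable (X i)) (hindep : iIndepFun X P)
    (hident : ∀ i, Measure.map (X i) P = Measure.map (X 0) P) {s : Set ℝ} (hs : MeasurableSet s)
    {δ : ℝ} (hδ : 0 ≤ δ) (n : ℕ) :
    P.real {ω | ∃ k, n ≤ k ∧
        k * δ ≤ ∑ i ∈ range k, (s.indicator 1 (X i ω) - P.real (X 0 ⁻¹' s))} ≤
      exp (-2 * n * δ ^ 2) := by
  have hp : ∀ i, P.real (X i ⁻¹' s) = P.real (X 0 ⁻¹' s) := fun i => by
    rw [← map_measureReal_apply (hmeas i) hs, hident i, map_measureReal_apply (hmeas 0) hs]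
  have hind : Measurable (s.indicator (1 : ℝ → ℝ)) := measurable_one.indicator hs
  refine (measureReal_exists_sum_range_ge_le
    (Y := fun i ω => s.indicator 1 (X i ω) - P.real (X 0 ⁻¹' s))
    (fun i => (hind.comp (hmeas i)).sub_const _) (hindep.comp _ fun _ => hind.sub_const _)
    (fun i => hp i ▸ hasSubgaussianMGF_indicator_comp_sub (hmeas i) hs) (by norm_num) hδ
    n).trans_eq ?_
  congr 1
  push_cast
  ring

lemma card_filter_lt_of_lt_sInf {z : ℕ → ℝ} {k : ℕ} (hk : 0 < k) {α c : ℝ} (hα : 0 < α)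
    (h : c < sInf {t : ℝ | α ≤ (1 / (k : ℝ)) * #{i ∈ range k | z i ≤ t}}) :
    (#{i ∈ range k | z i ≤ c} : ℝ) < α * k := by
  have hk' : (0 : ℝ) < k := by exact_mod_cast hk
  have hbdd : BddBelow {t : ℝ | α ≤ (1 / (k : ℝ)) * #{i ∈ range k | z i ≤ t}} := by
    refine ⟨(range k).inf' (nonempty_range_iff.mpr hk.ne') z, fun t ht => ?_⟩
    have hpos : 0 < #{i ∈ range k | z i ≤ t} := by
      by_contra! h0
      simp only [Set.mem_ofPred_eq, Nat.le_zero.mp h0, CharP.cast_eq_zero, mul_zero] at ht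
      linarith
    obtain ⟨i, hi⟩ := card_pos.mp hpos
    rw [mem_filter] at hi
    exact (inf'_le z hi.1).trans hi.2
  by_contra! hc
  refine (csInf_le hbdd ?_).not_gt h
  rw [Set.mem_ofPred_eq, one_div_mul_eq_div, le_div_iff₀ hk']
  exact hc

lemma le_card_filter_of_sInf_lt {z : ℕ → ℝ} {k : ℕ} (hk : 0 < k) {α c : ℝ} (hα : α ≤ 1)
    (h : sInf {t : ℝ | α ≤ (1 / (k : ℝ)) * #{i ∈ range k | z i ≤ t}} < c) :
    α * k ≤ (#{i ∈ range k | z i ≤ c} : ℝ) := by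
  have hk' : (0 : ℝ) < k := by exact_mod_cast hk
  have hne : {t : ℝ | α ≤ (1 / (k : ℝ)) * #{i ∈ range k | z i ≤ t}}.Nonempty := by
    refine ⟨(range k).sup' (nonempty_range_iff.mpr hk.ne') z, ?_⟩
    rw [Set.mem_ofPred_eq, filter_true_of_mem fun i hi => le_sup' z hi, card_range,
      one_div_mul_cancel hk'.ne']
    exact hα
  obtain ⟨t, ht, htc⟩ := exists_lt_of_csInf_lt hne h
  rw [Set.mem_ofPred_eq, one_div_mul_eq_div, le_div_iff₀ hk'] at ht
  have hmono : #{i ∈ range k | z i ≤ t} ≤ #{i ∈ range k | z i ≤ c} :=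
    card_le_card (monotone_filter_right _ fun i _ (hi : z i ≤ t) => hi.trans htc.le)
  exact ht.trans (by exact_mod_cast hmono)

end

theorem stmt_7_general {Ω : Type*} [MeasurableSpace Ω] (P : Measure Ω) [IsProbabilityMeasure P]
    (X : ℕ → Ω → ℝ) (hmeas : ∀ i, Measurable (X i))
    (hindep : iIndepFun X P)
    (hident : ∀ i, Measure.map (X i) P = Measure.map (X 0) P)
    (F : ℝ → ℝ) (hF : ∀ t, F t = (P {ω | X 0 ω ≤ t}).toReal)
    (α : ℝ) (hα : α ∈ Set.Ioo (0:ℝ) 1)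
    (q : ℝ)
    (huniq : ∀ ε : ℝ, 0 < ε → F (q - ε) < α ∧ α < F (q + ε))
    (empQuant : ℕ → Ω → ℝ)
    (hEQ : ∀ k ω, empQuant k ω =
      sInf {t : ℝ | α ≤ (1 / (k : ℝ)) *
        ((Finset.range k).filter (fun i => X i ω ≤ t)).card})
    (n : ℕ) (x : ℝ) (hx : 0 < x)
    (d : ℝ) (hd : d = min (F (q + x) - α) (α - F (q - x))) :
    (P {ω | ∃ k, n ≤ k ∧ x < |empQuant k ω - q|}).toReal ≤
      2 * Real.exp (-2 * (n : ℝ) * d ^ 2) := by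
  obtain ⟨hα0, hα1⟩ := hα
  obtain ⟨hlow, hup⟩ := huniq x hx
  have hd_up : d ≤ F (q + x) - α := hd ▸ min_le_left _ _
  have hd_low : d ≤ α - F (q - x) := hd ▸ min_le_right _ _
  have hd0 : 0 ≤ d := by rw [hd]; exact le_min (by linarith) (by linarith)
  have hsum_Iic : ∀ c k ω,
      ∑ i ∈ range k, (Set.Iic c).indicator 1 (X i ω) = (#{i ∈ range k | X i ω ≤ c} : ℝ) :=
    fun c k ω => by simp [Set.indicator_apply, sum_boole]
  have hsum_Ioi : ∀ c k ω,
      ∑ i ∈ range k, (Set.Ioi c).indicator 1 (X i ω) = k - (#{i ∈ range k | X i ω ≤ c} : ℝ) :=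
    fun c k ω => by
      simp [← Set.compl_Iic, Set.indicator_compl, sum_sub_distrib, hsum_Iic]
  have hp_Iic : ∀ c, P.real (X 0 ⁻¹' Set.Iic c) = F c := fun c => (hF c).symm
  have hp_Ioi : ∀ c, P.real (X 0 ⁻¹' Set.Ioi c) = 1 - F c := fun c => by
    rw [← Set.compl_Iic, Set.preimage_compl, probReal_compl_eq_one_sub (hmeas 0 measurableSet_Iic),
      hp_Iic]
  have hsub : {ω | ∃ k, n ≤ k ∧ x < |empQuant k ω - q|} ⊆
      {ω | ∃ k, n ≤ k ∧ k * d ≤ ∑ i ∈ range k,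
        ((Set.Ioi (q + x)).indicator 1 (X i ω) - P.real (X 0 ⁻¹' Set.Ioi (q + x)))} ∪
      {ω | ∃ k, n ≤ k ∧ k * d ≤ ∑ i ∈ range k,
        ((Set.Iic (q - x)).indicator 1 (X i ω) - P.real (X 0 ⁻¹' Set.Iic (q - x)))} := by
    rintro ω ⟨k, hnk, hdev⟩
    rcases Nat.eq_zero_or_pos k with rfl | hk
    · exact Or.inl ⟨0, hnk, by simp⟩
    have hk' : (0 : ℝ) ≤ k := k.cast_nonneg
    rw [hEQ] at hdev
    rcases lt_abs.mp hdev with hdev | hdev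
    · have hcount := card_filter_lt_of_lt_sInf hk hα0 (lt_sub_iff_add_lt'.mp hdev)
      refine Or.inl ⟨k, hnk, ?_⟩
      rw [sum_sub_distrib, hsum_Ioi, hp_Ioi, sum_const, card_range, nsmul_eq_mul]
      linarith [mul_le_mul_of_nonneg_left hd_up hk']
    · have hcount := le_card_filter_of_sInf_lt hk hα1.le
        (lt_sub_comm.mp (neg_sub (sInf _) q ▸ hdev))
      refine Or.inr ⟨k, hnk, ?_⟩
      rw [sum_sub_distrib, hsum_Iic, hp_Iic, sum_const, card_range, nsmul_eq_mul]
      linarith [mul_le_mul_of_nonneg_left hd_low hk']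
  calc (P {ω | ∃ k, n ≤ k ∧ x < |empQuant k ω - q|}).toReal
      ≤ exp (-2 * n * d ^ 2) + exp (-2 * n * d ^ 2) :=
        (measureReal_mono hsub).trans <| (measureReal_union_le _ _).trans <| add_le_add
          (measureReal_exists_sum_indicator_sub_ge_le hmeas hindep hident measurableSet_Ioi hd0 n)
          (measureReal_exists_sum_indicator_sub_ge_le hmeas hindep hident measurableSet_Iic hd0 n)
    _ = 2 * exp (-2 * n * d ^ 2) := by ring

/-- Supremal inequality for empirical quantiles (improvement of Serfling's inequality):
if the `α`-quantile `q` is unique, then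
`P(sup_{k ≥ n} |F_k⁻¹(α) - q| > x) ≤ 2 exp(-2 n d(x)²)` where
`d(x) = min{F(q+x) - α, α - F(q-x)}`. -/
theorem stmt_7 {Ω : Type*} [MeasurableSpace Ω] (P : Measure Ω) [IsProbabilityMeasure P]
    (X : ℕ → Ω → ℝ) (hmeas : ∀ i, Measurable (X i))
    (hindep : iIndepFun X P)
    (hident : ∀ i, Measure.map (X i) P = Measure.map (X 0) P)
    (F : ℝ → ℝ) (hF : ∀ t, F t = (P {ω | X 0 ω ≤ t}).toReal)
    (α : ℝ) (hα : α ∈ Set.Ioo (0:ℝ) 1)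
    (q : ℝ) (hq : q = sInf {t : ℝ | α ≤ F t})
    (huniq : ∀ ε : ℝ, 0 < ε → F (q - ε) < α ∧ α < F (q + ε))
    (empQuant : ℕ → Ω → ℝ)
    (hEQ : ∀ k ω, empQuant k ω =
      sInf {t : ℝ | α ≤ (1 / (k : ℝ)) *
        ((Finset.range k).filter (fun i => X i ω ≤ t)).card})
    (n : ℕ) (hn : 1 ≤ n) (x : ℝ) (hx : 0 < x)
    (d : ℝ) (hd : d = min (F (q + x) - α) (α - F (q - x))) :
    (P {ω | ∃ k, n ≤ k ∧ x < |empQuant k ω - q|}).toReal ≤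
      2 * Real.exp (-2 * (n : ℝ) * d ^ 2) :=
  stmt_7_general P X hmeas hindep hident F hF α hα q huniq empQuant hEQ n x hx d hd
end

section
/- Let X₁, X₂, … be i.i.d. with distribution function F, α ∈ (0,1), and let d(x) = min{F(q_α + x) - α, α - F(q_α - x)} where q_α = F⁻¹(α). Then for all x > 0 with d(x) > 0 and all n ∈ ℕ, P(sup_{k ≥ n}(Fₖ⁻¹(α) - q_α) > x) ≤ exp(-2 n (F(q_α + x) - α)²). -/
/-!
Write `p = F (q + x)` and `δ = p - α > 0`. The sample quantile `F_k⁻¹(α)` exceeds `q + x` only if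
at most `α k` of `X₀, …, X_{k-1}` lie in `(-∞, q + x]`, i.e. only if the sum of the centred
Bernoulli variables `Z_i = p - 1{X_i ≤ q + x}` reaches `δ k`. By Hoeffding's lemma each `Z_i` is
`1/4`-sub-Gaussian, so with `s = 4 δ` the tilted products `∏_{i<k} exp (s Z_i) / E exp (s Z_i)`
are at least `exp (2 δ² k)` on that event. These products form a nonnegative martingale of mean
one, and Doob's maximal inequality (Ville's inequality) bounds the probability that they ever
exceed `exp (2 δ² n)` by `exp (-2 δ² n)`.
-/

open MeasureTheory ProbabilityTheory Real
open scoped NNReal ENNReal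

section

variable {Ω : Type*} {m : MeasurableSpace Ω} {μ : Measure Ω}

theorem MeasureTheory.Martingale.mul_measure_exists_ge_le [IsFiniteMeasure μ]
    {𝒢 : Filtration ℕ m} {f : ℕ → Ω → ℝ} (hf : Martingale f 𝒢 μ) (hnonneg : 0 ≤ f) (ε : ℝ≥0) :
    ε * μ {ω | ∃ k, (ε : ℝ) ≤ f k ω} ≤ ENNReal.ofReal (μ[f 0]) := by
  set S : ℕ → Set Ω := fun N =>
    {ω | (ε : ℝ) ≤ (Finset.range (N + 1)).sup' Finset.nonempty_range_add_one fun k => f k ω}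
  have hS : {ω | ∃ k, (ε : ℝ) ≤ f k ω} = ⋃ N, S N := by
    ext ω
    simp only [S, Set.mem_ofPred_eq, Set.mem_iUnion, Finset.le_sup'_iff, Finset.mem_range]
    exact ⟨fun ⟨k, hk⟩ => ⟨k, k, k.lt_succ_self, hk⟩, fun ⟨_, k, _, hk⟩ => ⟨k, hk⟩⟩
  have hS_mono : Monotone S := by
    intro N N' hN ω hω
    change (ε : ℝ) ≤ _ at hω ⊢
    exact le_trans hω (Finset.sup'_mono _ (Finset.range_subset_range.2 (by omega)) _)
  rw [hS, hS_mono.measure_iUnion, ENNReal.mul_iSup]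
  refine iSup_le fun N => (maximal_ineq hf.submartingale hnonneg N).trans ?_
  gcongr
  calc ∫ ω in S N, f N ω ∂μ ≤ ∫ ω, f N ω ∂μ :=
        setIntegral_le_integral (hf.integrable N) (Filter.Eventually.of_forall (hnonneg N))
    _ = μ[f 0] := by
        simpa using (hf.setIntegral_eq (Nat.zero_le N) MeasurableSet.univ).symm

namespace ProbabilityTheory

variable {W : ℕ → Ω → ℝ}

theorem iIndepFun.integrable_prod (hind : iIndepFun W μ) (hmeas : ∀ i, Measurable (W i))
    (hint : ∀ i, Integrable (W i) μ) (s : Finset ℕ) :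
    Integrable (∏ i ∈ s, W i) μ := by
  classical
  have := hind.isProbabilityMeasure
  induction s using Finset.induction_on with
  | empty => exact integrable_const (1 : ℝ)
  | insert i s hi ih =>
    rw [Finset.prod_insert hi]
    exact (hind.indepFun_finsetProd_of_notMem hmeas hi).symm.integrable_mul (hint i) ih

theorem iIndepFun.martingale_prod_range_succ (hind : iIndepFun W μ)
    (hmeas : ∀ i, Measurable (W i)) (hint : ∀ i, Integrable (W i) μ) (hmean : ∀ i, μ[W i] = 1) :
    Martingale (fun k => ∏ i ∈ Finset.range (k + 1), W i)
      (Filtration.natural W fun i => (hmeas i).stronglyMeasurable) μ := by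
  have := hind.isProbabilityMeasure
  set 𝒢 := Filtration.natural W fun i => (hmeas i).stronglyMeasurable
  have hadapted : StronglyAdapted 𝒢 fun k => ∏ i ∈ Finset.range (k + 1), W i := fun k =>
    Finset.stronglyMeasurable_prod _ fun i hi =>
      (Filtration.stronglyAdapted_natural _ i).mono (𝒢.mono (Finset.mem_range_succ_iff.1 hi))
  have hindep : ∀ k, Indep (MeasurableSpace.comap (W (k + 1)) inferInstance) (𝒢 k) μ := by
    intro k
    have := indep_iSup_of_disjoint (fun i => (hmeas i).comap_le)
      ((iIndepFun_iff_iIndep _ W μ).1 hind) (S := {k + 1}) (T := Set.Iic k)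
      (Set.disjoint_singleton_left.2 (by simp))
    simpa [𝒢, Filtration.natural] using this
  refine martingale_nat hadapted (fun k => hind.integrable_prod hmeas hint _) fun k => ?_
  have hprod : ∏ i ∈ Finset.range (k + 1 + 1), W i =
      (∏ i ∈ Finset.range (k + 1), W i) * W (k + 1) :=
    Finset.prod_range_succ _ _
  rw [hprod]
  refine ((condExp_mul_of_stronglyMeasurable_left (hadapted k) ?_ (hint _)).trans ?_).symm
  · rw [← hprod]
    exact hind.integrable_prod hmeas hint _
  filter_upwards [condExp_indep_eq ((hmeas _).comap_le) (𝒢.le k)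
    (comap_measurable (W (k + 1))).stronglyMeasurable (hindep k)] with ω hω
  simp [hω, hmean]

theorem iIndepFun.measureReal_exists_le_prod_le_inv (hind : iIndepFun W μ)
    (hmeas : ∀ i, Measurable (W i)) (hint : ∀ i, Integrable (W i) μ) (hmean : ∀ i, μ[W i] = 1)
    (hnonneg : ∀ i ω, 0 ≤ W i ω) {C : ℝ} (hC : 0 < C) :
    μ.real {ω | ∃ k, C ≤ ∏ i ∈ Finset.range (k + 1), W i ω} ≤ C⁻¹ := by
  have := hind.isProbabilityMeasure
  have hville := (hind.martingale_prod_range_succ hmeas hint hmean).mul_measure_exists_ge_le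
    (fun k ω => by simpa using Finset.prod_nonneg fun i _ => hnonneg i ω) C.toNNReal
  simp only [Real.coe_toNNReal _ hC.le, zero_add, Finset.range_one, Finset.prod_singleton,
    hmean, ENNReal.ofReal_one, Finset.prod_apply] at hville
  rw [← ENNReal.ofReal_toReal (measure_ne_top μ _), ENNReal.ofNNReal_toNNReal,
    ← ENNReal.ofReal_mul hC.le] at hville
  rw [inv_eq_one_div, le_div_iff₀' hC, measureReal_def]
  exact ENNReal.ofReal_le_one.1 hville

variable {Z : ℕ → Ω → ℝ}

-- The tilt `s = ε / c` maximises `s ε - c s² / 2`, the maximum being `ε² / (2 c)`.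
theorem exp_le_prod_exp_mul_div_mgf [IsProbabilityMeasure μ] {c : ℝ≥0} (hc : c ≠ 0)
    (hsubG : ∀ i, HasSubgaussianMGF (Z i) c μ) {ε : ℝ} (hε : 0 ≤ ε) {k : ℕ} {ω : Ω}
    (hk : ε * k ≤ ∑ i ∈ Finset.range k, Z i ω) :
    exp (k * ε ^ 2 / (2 * c)) ≤
      ∏ i ∈ Finset.range k, exp (ε / c * Z i ω) / mgf (Z i) μ (ε / c) := by
  have hc : (0 : ℝ) < c := by positivity
  have hmgf_pos : ∀ i, 0 < mgf (Z i) μ (ε / c) :=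
    fun i => mgf_pos ((hsubG i).integrable_exp_mul _)
  rw [Finset.prod_div_distrib, ← exp_sum, le_div_iff₀ (Finset.prod_pos fun i _ => hmgf_pos i)]
  calc exp (k * ε ^ 2 / (2 * c)) * ∏ i ∈ Finset.range k, mgf (Z i) μ (ε / c)
      ≤ exp (k * ε ^ 2 / (2 * c)) * ∏ i ∈ Finset.range k, exp (c * (ε / c) ^ 2 / 2) := by
        gcongr
        · exact fun i _ => (hmgf_pos i).le
        · exact (hsubG _).mgf_le _
    _ = exp (ε / c * (ε * k)) := by
        rw [Finset.prod_const, Finset.card_range, ← exp_nat_mul, ← exp_add]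
        congr 1
        field_simp
        ring
    _ ≤ exp (∑ i ∈ Finset.range k, ε / c * Z i ω) := by
        rw [← Finset.mul_sum]
        gcongr

theorem measureReal_exists_mul_le_sum_range_le_of_iIndepFun (hind : iIndepFun Z μ)
    (hmeas : ∀ i, Measurable (Z i)) {c : ℝ≥0} (hsubG : ∀ i, HasSubgaussianMGF (Z i) c μ)
    {ε : ℝ} (hε : 0 ≤ ε) (n : ℕ) :
    μ.real {ω | ∃ k, n ≤ k ∧ ε * k ≤ ∑ i ∈ Finset.range k, Z i ω} ≤
      exp (-n * ε ^ 2 / (2 * c)) := by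
  have := hind.isProbabilityMeasure
  -- for `c = 0` the bound is `exp 0 = 1`, as division by zero gives `0`
  rcases eq_or_ne c 0 with rfl | hc
  · simp
  rcases n.eq_zero_or_pos with rfl | hn
  · simp
  set s := ε / c
  set W : ℕ → Ω → ℝ := fun i ω => exp (s * Z i ω) / mgf (Z i) μ s
  have hW_meas : ∀ i, Measurable (W i) := fun i => by fun_prop
  have hW_ind : iIndepFun W μ :=
    hind.comp (fun i x => exp (s * x) / mgf (Z i) μ s) fun i => by fun_prop
  have hW_int : ∀ i, Integrable (W i) μ := fun i => ((hsubG i).integrable_exp_mul s).div_const _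
  have hW_mean : ∀ i, μ[W i] = 1 := fun i => by
    rw [integral_div, ← mgf, div_self (mgf_pos ((hsubG i).integrable_exp_mul s)).ne']
  have hW_nonneg : ∀ i ω, 0 ≤ W i ω := fun i ω => div_nonneg (exp_pos _).le mgf_nonneg
  calc μ.real {ω | ∃ k, n ≤ k ∧ ε * k ≤ ∑ i ∈ Finset.range k, Z i ω}
      ≤ μ.real {ω | ∃ k, exp (n * ε ^ 2 / (2 * c)) ≤ ∏ i ∈ Finset.range (k + 1), W i ω} := by
        refine measureReal_mono ?_
        rintro ω ⟨k, hnk, hk⟩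
        obtain ⟨j, rfl⟩ := Nat.exists_eq_add_one_of_ne_zero (hn.trans_le hnk).ne'
        refine ⟨j, le_trans ?_ (exp_le_prod_exp_mul_div_mgf hc hsubG hε hk)⟩
        gcongr
    _ ≤ (exp (n * ε ^ 2 / (2 * c)))⁻¹ :=
        hW_ind.measureReal_exists_le_prod_le_inv hW_meas hW_int hW_mean hW_nonneg (exp_pos _)
    _ = exp (-n * ε ^ 2 / (2 * c)) := by rw [← exp_neg, neg_mul, neg_div]

theorem hasSubgaussianMGF_measureReal_sub_indicator {β : Type*} [MeasurableSpace β]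
    [IsProbabilityMeasure μ] {X : Ω → β} (hX : Measurable X) {s : Set β} (hs : MeasurableSet s) :
    HasSubgaussianMGF (fun ω => μ.real (X ⁻¹' s) - s.indicator 1 (X ω)) 4⁻¹ μ := by
  have hf : Measurable (s.indicator (1 : β → ℝ)) := measurable_one.indicator hs
  have hmean : μ[fun ω => s.indicator (1 : β → ℝ) (X ω)] = μ.real (X ⁻¹' s) := by
    rw [← integral_map hX.aemeasurable hf.aestronglyMeasurable, integral_indicator_one hs,
      map_measureReal_apply hX hs]
  have hHoeffding := (hasSubgaussianMGF_of_mem_Icc (hf.comp hX).aemeasurable (μ := μ)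
    (a := 0) (b := 1) (ae_of_all _ fun ω => ⟨Set.indicator_nonneg (fun _ _ => zero_le_one) _,
      Set.indicator_le_self' (fun _ _ => zero_le_one) _⟩)).neg
  convert hHoeffding using 1
  · ext ω
    simp [hmean]
  · norm_num

end ProbabilityTheory

end

theorem bddBelow_setOf_le_card_filter_le {α : ℝ} (hα : 0 < α) (v : ℕ → ℝ) (k : ℕ) :
    BddBelow {t : ℝ | α ≤ (1 / (k : ℝ)) * ((Finset.range k).filter (fun i => v i ≤ t)).card} := by
  refine ⟨-∑ i ∈ Finset.range k, |v i|, fun t ht => ?_⟩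
  obtain ⟨i, hi⟩ : ((Finset.range k).filter (fun i => v i ≤ t)).Nonempty := by
    rw [Finset.nonempty_iff_ne_empty]
    rintro h
    simp only [Set.mem_ofPred_eq, h, Finset.card_empty, Nat.cast_zero, mul_zero] at ht
    linarith
  rw [Finset.mem_filter] at hi
  calc -∑ i ∈ Finset.range k, |v i| ≤ -|v i| :=
        neg_le_neg (Finset.single_le_sum (fun j _ => abs_nonneg (v j)) hi.1)
    _ ≤ v i := neg_abs_le _
    _ ≤ t := hi.2

theorem card_filter_le_of_lt_sInf {α : ℝ} (hα : 0 < α) (v : ℕ → ℝ) (k : ℕ) {r : ℝ}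
    (hr : r < sInf {t : ℝ | α ≤ (1 / (k : ℝ)) *
      ((Finset.range k).filter (fun i => v i ≤ t)).card}) :
    (((Finset.range k).filter (fun i => v i ≤ r)).card : ℝ) ≤ α * k := by
  have hr := notMem_of_lt_csInf hr (bddBelow_setOf_le_card_filter_le hα v k)
  rcases k.eq_zero_or_pos with rfl | hk
  · simp
  rw [Set.mem_ofPred_eq, not_le, one_div, inv_mul_lt_iff₀ (by exact_mod_cast hk)] at hr
  linarith

theorem sub_mul_le_sum_sub_indicator_of_lt_sInf {α : ℝ} (hα : 0 < α) (v : ℕ → ℝ) (k : ℕ)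
    {r : ℝ} (hr : r < sInf {t : ℝ | α ≤ (1 / (k : ℝ)) *
      ((Finset.range k).filter (fun i => v i ≤ t)).card}) (p : ℝ) :
    (p - α) * k ≤ ∑ i ∈ Finset.range k, (p - (Set.Iic r).indicator 1 (v i)) := by
  have hcount : ∑ i ∈ Finset.range k, (Set.Iic r).indicator (1 : ℝ → ℝ) (v i) =
      ((Finset.range k).filter (fun i => v i ≤ r)).card := by
    simp [Set.indicator_apply, Finset.sum_boole]
  rw [Finset.sum_sub_distrib, Finset.sum_const, Finset.card_range, nsmul_eq_mul, hcount]
  linarith [card_filter_le_of_lt_sInf hα v k hr]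

theorem stmt_8_general {Ω : Type*} [MeasurableSpace Ω] (P : Measure Ω) [IsProbabilityMeasure P]
    (X : ℕ → Ω → ℝ) (hmeas : ∀ i, Measurable (X i))
    (hindep : iIndepFun X P)
    (hident : ∀ i, Measure.map (X i) P = Measure.map (X 0) P)
    (F : ℝ → ℝ) (hF : ∀ t, F t = (P {ω | X 0 ω ≤ t}).toReal)
    (α : ℝ) (hα : α ∈ Set.Ioo (0:ℝ) 1)
    (q : ℝ)
    (empQuant : ℕ → Ω → ℝ)
    (hEQ : ∀ k ω, empQuant k ω =
      sInf {t : ℝ | α ≤ (1 / (k : ℝ)) *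
        ((Finset.range k).filter (fun i => X i ω ≤ t)).card})
    (x : ℝ)
    (hdpos : 0 < min (F (q + x) - α) (α - F (q - x)))
    (n : ℕ) :
    (P {ω | ∃ k, n ≤ k ∧ x < empQuant k ω - q}).toReal ≤
      Real.exp (-2 * (n : ℝ) * (F (q + x) - α) ^ 2) := by
  set p := F (q + x) with hp_def
  set g : ℝ → ℝ := fun t => p - (Set.Iic (q + x)).indicator 1 t
  have hg : Measurable g := (measurable_one.indicator measurableSet_Iic).const_sub _
  have hp : ∀ i, P.real (X i ⁻¹' Set.Iic (q + x)) = p := fun i => by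
    rw [← map_measureReal_apply (hmeas i) measurableSet_Iic, hident i,
      map_measureReal_apply (hmeas 0) measurableSet_Iic, hp_def, hF]
    rfl
  have hsubG : ∀ i, HasSubgaussianMGF (fun ω => g (X i ω)) 4⁻¹ P := fun i => by
    have := hasSubgaussianMGF_measureReal_sub_indicator (μ := P) (hmeas i)
      (measurableSet_Iic (a := q + x))
    rwa [hp i] at this
  have hevent : {ω | ∃ k, n ≤ k ∧ x < empQuant k ω - q} ⊆
      {ω | ∃ k, n ≤ k ∧ (p - α) * k ≤ ∑ i ∈ Finset.range k, g (X i ω)} := by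
    rintro ω ⟨k, hnk, hk⟩
    exact ⟨k, hnk, sub_mul_le_sum_sub_indicator_of_lt_sInf hα.1 (fun i => X i ω) k
      (by rw [← hEQ]; linarith) p⟩
  calc (P {ω | ∃ k, n ≤ k ∧ x < empQuant k ω - q}).toReal
      ≤ P.real {ω | ∃ k, n ≤ k ∧ (p - α) * k ≤ ∑ i ∈ Finset.range k, g (X i ω)} :=
        measureReal_mono hevent
    _ ≤ exp (-n * (p - α) ^ 2 / (2 * (4⁻¹ : ℝ≥0))) :=
        measureReal_exists_mul_le_sum_range_le_of_iIndepFun (hindep.comp (fun _ => g) fun _ => hg)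
          (fun i => hg.comp (hmeas i)) hsubG (lt_min_iff.1 hdpos).1.le n
    _ = exp (-2 * n * (p - α) ^ 2) := by
        congr 1
        norm_num
        ring

/-- One-sided supremal quantile inequality:
`P(sup_{k ≥ n}(F_k⁻¹(α) - q_α) > x) ≤ exp(-2 n (F(q_α + x) - α)²)` for `x > 0` with
`d(x) = min{F(q_α+x) - α, α - F(q_α-x)} > 0`. -/
theorem stmt_8 {Ω : Type*} [MeasurableSpace Ω] (P : Measure Ω) [IsProbabilityMeasure P]
    (X : ℕ → Ω → ℝ) (hmeas : ∀ i, Measurable (X i))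
    (hindep : iIndepFun X P)
    (hident : ∀ i, Measure.map (X i) P = Measure.map (X 0) P)
    (F : ℝ → ℝ) (hF : ∀ t, F t = (P {ω | X 0 ω ≤ t}).toReal)
    (α : ℝ) (hα : α ∈ Set.Ioo (0:ℝ) 1)
    (q : ℝ) (hq : q = sInf {t : ℝ | α ≤ F t})
    (empQuant : ℕ → Ω → ℝ)
    (hEQ : ∀ k ω, empQuant k ω =
      sInf {t : ℝ | α ≤ (1 / (k : ℝ)) *
        ((Finset.range k).filter (fun i => X i ω ≤ t)).card})
    (x : ℝ) (hx : 0 < x)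
    (hdpos : 0 < min (F (q + x) - α) (α - F (q - x)))
    (n : ℕ) (hn : 1 ≤ n) :
    (P {ω | ∃ k, n ≤ k ∧ x < empQuant k ω - q}).toReal ≤
      Real.exp (-2 * (n : ℝ) * (F (q + x) - α) ^ 2) :=
  stmt_8_general P X hmeas hindep hident F hF α hα q empQuant hEQ x hdpos n
end

section
/- Let (Zₙ) be a sequence such that for constants K ≥ 0, β > 0, and for all ε > 0 there is β(ε) > 0 with P(sup_{k ≥ n} |Zₖ| > ε) ≤ K exp(-β(ε) n) for all n. Define L_ε = sup{k ∈ ℕ : |Z_k| > ε} (with L_ε = 0 if the set is empty, L_ε = ∞ if unbounded). Then E[L_ε^r] < ∞ for every r > 0 and every ε > 0, i.e., Zₙ → 0 r-quickly for all r > 0. -/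
/-!
For `x ∈ [0, ∞]` and `r > 0`, `x ^ r ≤ ∑ₙ (n + 1) ^ r · 1{n < x}`, so
`E[L_ε ^ r] ≤ ∑ₙ (n + 1) ^ r · P(L_ε > n)`. The event `L_ε > n` says that `|Z_k| > ε` for
some `k ≥ n`, whose probability is at most `K exp(-β n)`, and a polynomial times a decaying
exponential is summable.
-/

open MeasureTheory
open scoped ENNReal

theorem summable_add_one_rpow_mul_exp_neg_mul (r : ℝ) {β : ℝ} (hβ : 0 < β) :
    Summable fun n : ℕ => ((n : ℝ) + 1) ^ r * Real.exp (-β * n) := by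
  set k := ⌈r⌉₊
  have hshift : Summable fun n : ℕ => ((n : ℝ) + 1) ^ k * Real.exp (-β * n) := by
    refine (((summable_nat_add_iff 1).mpr
      (Real.summable_pow_mul_exp_neg_nat_mul k hβ)).mul_left (Real.exp β)).congr fun n => ?_
    push_cast
    rw [mul_left_comm, ← Real.exp_add]
    ring_nf
  refine hshift.of_nonneg_of_le (fun n => by positivity) fun n => ?_
  gcongr
  calc ((n : ℝ) + 1) ^ r ≤ ((n : ℝ) + 1) ^ (k : ℝ) :=
        Real.rpow_le_rpow_of_exponent_le (by linarith [n.cast_nonneg (α := ℝ)]) (Nat.le_ceil r)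
    _ = ((n : ℝ) + 1) ^ k := Real.rpow_natCast _ k

theorem ENNReal.tsum_add_one_rpow_mul_ofReal_exp_neg_mul_lt_top {r : ℝ} (hr : 0 ≤ r) {β : ℝ}
    (hβ : 0 < β) (K : ℝ) :
    ∑' n : ℕ, ((n : ℝ≥0∞) + 1) ^ r * ENNReal.ofReal (K * Real.exp (-β * n)) < ∞ := by
  have hsum : Summable fun n : ℕ => ((n : ℝ) + 1) ^ r * (K * Real.exp (-β * n)) := by
    simpa only [mul_left_comm] using (summable_add_one_rpow_mul_exp_neg_mul r hβ).mul_left K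
  convert hsum.tsum_ofReal_lt_top using 3 with n
  rw [ENNReal.ofReal_mul (p := ((n : ℝ) + 1) ^ r) (by positivity),
    ← ENNReal.ofReal_rpow_of_nonneg (by positivity) hr]
  norm_cast

theorem ENNReal.rpow_le_tsum_add_one_rpow {r : ℝ} (hr : 0 < r) (x : ℝ≥0∞) :
    x ^ r ≤ ∑' n : ℕ, if (n : ℝ≥0∞) < x then ((n : ℝ≥0∞) + 1) ^ r else 0 := by
  rcases eq_or_ne x ⊤ with rfl | hx
  · have hterm (n : ℕ) : 1 ≤ if (n : ℝ≥0∞) < ⊤ then ((n : ℝ≥0∞) + 1) ^ r else 0 := by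
      simpa using ENNReal.one_le_rpow le_add_self hr
    calc ⊤ ^ r = ∑' _ : ℕ, (1 : ℝ≥0∞) := by
          rw [ENNReal.top_rpow_of_pos hr, ENNReal.tsum_const_eq_top_of_ne_zero one_ne_zero]
      _ ≤ _ := ENNReal.tsum_le_tsum hterm
  lift x to NNReal using hx
  rcases eq_zero_or_pos x with rfl | hpos
  · simp [ENNReal.zero_rpow_of_pos hr]
  -- `n = ⌈x⌉₊ - 1` is the integer with `n < x ≤ n + 1`
  have hceil : ⌈x⌉₊ - 1 + 1 = ⌈x⌉₊ := Nat.sub_add_cancel (Nat.ceil_pos.mpr hpos)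
  have hlt : ((⌈x⌉₊ - 1 : ℕ) : ℝ≥0∞) < x := by
    exact_mod_cast Nat.lt_ceil.mp (by omega)
  have hle : (x : ℝ≥0∞) ≤ ((⌈x⌉₊ - 1 : ℕ) : ℝ≥0∞) + 1 := by
    exact_mod_cast hceil ▸ Nat.le_ceil x
  refine le_trans ?_ (ENNReal.le_tsum (⌈x⌉₊ - 1))
  rw [if_pos hlt]
  exact ENNReal.rpow_le_rpow hle hr.le

theorem lintegral_rpow_le_tsum_add_one_rpow_mul_measure {Ω : Type*} [MeasurableSpace Ω]
    (μ : Measure Ω) (f : Ω → ℝ≥0∞) {r : ℝ} (hr : 0 < r) :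
    ∫⁻ ω, f ω ^ r ∂μ ≤ ∑' n : ℕ, ((n : ℝ≥0∞) + 1) ^ r * μ {ω | (n : ℝ≥0∞) < f ω} := by
  -- `f` need not be measurable, so the level sets are replaced by measurable hulls
  set A : ℕ → Set Ω := fun n => toMeasurable μ {ω | (n : ℝ≥0∞) < f ω}
  have hA (n : ℕ) : MeasurableSet (A n) := measurableSet_toMeasurable _ _
  have hpt (ω : Ω) : f ω ^ r ≤ ∑' n : ℕ, (A n).indicator (fun _ => ((n : ℝ≥0∞) + 1) ^ r) ω := by
    refine (ENNReal.rpow_le_tsum_add_one_rpow hr (f ω)).trans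
      (ENNReal.tsum_le_tsum fun n => ?_)
    split_ifs with h
    · rw [Set.indicator_of_mem (show ω ∈ A n from subset_toMeasurable _ _ h)]
    · exact zero_le
  calc ∫⁻ ω, f ω ^ r ∂μ
      ≤ ∫⁻ ω, ∑' n : ℕ, (A n).indicator (fun _ => ((n : ℝ≥0∞) + 1) ^ r) ω ∂μ :=
        lintegral_mono hpt
    _ = ∑' n : ℕ, ((n : ℝ≥0∞) + 1) ^ r * μ (A n) := by
        rw [lintegral_tsum fun n => (measurable_const.indicator (hA n)).aemeasurable]
        exact tsum_congr fun n => lintegral_indicator_const (hA n) _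
    _ = ∑' n : ℕ, ((n : ℝ≥0∞) + 1) ^ r * μ {ω | (n : ℝ≥0∞) < f ω} := by
        simp only [A, measure_toMeasurable]

theorem stmt_9_general {Ω : Type*} [MeasurableSpace Ω] (P : Measure Ω)
    (Z : ℕ → Ω → ℝ) (K : ℝ)
    (hbound : ∀ ε : ℝ, 0 < ε → ∃ β : ℝ, 0 < β ∧ ∀ n : ℕ,
      P {ω | ∃ k, n ≤ k ∧ ε < |Z k ω|} ≤ ENNReal.ofReal (K * Real.exp (-β * n)))
    (L : ℝ → Ω → ℝ≥0∞)
    (hL : ∀ ε ω, L ε ω = ⨆ k ∈ {k : ℕ | ε < |Z k ω|}, (k : ℝ≥0∞))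
    (r : ℝ) (hr : 0 < r) (ε : ℝ) (hε : 0 < ε) :
    ∫⁻ ω, (L ε ω) ^ r ∂P < ⊤ := by
  obtain ⟨β, hβ, htail⟩ := hbound ε hε
  have hexit (n : ℕ) : {ω | (n : ℝ≥0∞) < L ε ω} ⊆ {ω | ∃ k, n ≤ k ∧ ε < |Z k ω|} := by
    intro ω h
    simp only [hL, lt_iSup_iff, Nat.cast_lt] at h
    obtain ⟨k, hk, hnk⟩ := h
    exact ⟨k, hnk.le, hk⟩
  calc ∫⁻ ω, (L ε ω) ^ r ∂P
      ≤ ∑' n : ℕ, ((n : ℝ≥0∞) + 1) ^ r * P {ω | (n : ℝ≥0∞) < L ε ω} :=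
        lintegral_rpow_le_tsum_add_one_rpow_mul_measure P (L ε) hr
    _ ≤ ∑' n : ℕ, ((n : ℝ≥0∞) + 1) ^ r * ENNReal.ofReal (K * Real.exp (-β * n)) :=
        ENNReal.tsum_le_tsum fun n => by gcongr; exact (measure_mono (hexit n)).trans (htail n)
    _ < ⊤ := ENNReal.tsum_add_one_rpow_mul_ofReal_exp_neg_mul_lt_top hr.le hβ K

/-- Exponential supremal tail bounds imply `r`-quick convergence to `0` for every `r > 0`:
the last exit time `L_ε = sup{k : |Z_k| > ε}` (`0` if empty, `∞` if unbounded) has finite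
`r`-th moment for every `ε > 0`. -/
theorem stmt_9 {Ω : Type*} [MeasurableSpace Ω] (P : Measure Ω) [IsProbabilityMeasure P]
    (Z : ℕ → Ω → ℝ) (K : ℝ) (hK : 0 ≤ K)
    (hbound : ∀ ε : ℝ, 0 < ε → ∃ β : ℝ, 0 < β ∧ ∀ n : ℕ,
      P {ω | ∃ k, n ≤ k ∧ ε < |Z k ω|} ≤ ENNReal.ofReal (K * Real.exp (-β * n)))
    (L : ℝ → Ω → ℝ≥0∞)
    (hL : ∀ ε ω, L ε ω = ⨆ k ∈ {k : ℕ | ε < |Z k ω|}, (k : ℝ≥0∞))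
    (r : ℝ) (hr : 0 < r) (ε : ℝ) (hε : 0 < ε) :
    ∫⁻ ω, (L ε ω) ^ r ∂P < ⊤ :=
  stmt_9_general P Z K hbound L hL r hr ε hε
end
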